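/- arXiv:1012.5631 — 2 statements merged into one kernel-verified Lean document; each statement's English description precedes it below -/
import Mathlib

section
/- Let p be a prime, S a group, and R a normal subgroup of S with R ≤ S^{(2)}. Assume R^{(2,S)} = R ∩ S^{(3)}. Then the following are equivalent: (1) R^{(3,S)} = R ∩ S^{(4)}; (2) R^{(3,S)} = R^{(2,S)} ∩ S^{(4)}; (3) every group homomorphism φ : R^{(2,S)} → ℤ/pℤ whose kernel contains R^{(3,S)} also has R^{(2,S)} ∩ S^{(4)} contained in its kernel; (4) every group homomorphism φ : R^{(2,S)} → ℤ/pℤ whose kernel contains R^{(3,S)} is the restriction to R^{(2,S)} of a group homomorphism ψ : S^{(3)} → ℤ/pℤ whose kernel contains S^{(4)}. -/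
/-!
If `G^p [G, G] ≤ M ⊴ G`, then `G ⧸ M` is an elementary abelian `p`-group, i.e. an `𝔽_p`-vector
space, and homomorphisms `G → ℤ/pℤ` killing `M` are its linear functionals. Functionals separate
points, so for `G = R^{(2,S)}`, `M = R^{(3,S)}` a subgroup lies in `R^{(3,S)}` iff every such
functional kills it: this is (2) ⇔ (3). Functionals also extend from subspaces, and a functional on
`R^{(2,S)}` killing `R^{(2,S)} ∩ S^{(4)}` is a functional on the image of `R^{(2,S)}` in
`S^{(3)} ⧸ S^{(4)}`: this is (3) ⇔ (4). Finally (1) ⇔ (2) because `R^{(2,S)} = R ∩ S^{(3)}` and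
`S^{(4)} ≤ S^{(3)}`.
-/

open scoped commutatorElement

/-- The subgroup generated by all `p`-th powers of elements of `H` together with all
commutators `⁅h, g⁆ = h * g * h⁻¹ * g⁻¹` with `h ∈ H` and `g` in the ambient group. -/
def pStep (p : ℕ) {G : Type*} [Group G] (H : Subgroup G) : Subgroup G :=
  Subgroup.closure ({x : G | ∃ h ∈ H, x = h ^ p} ∪ {x : G | ∃ h ∈ H, ∃ g : G, x = ⁅h, g⁆})

/-- `pSeries p H n` is the filtration `H^{(n,G)}`: `H^{(1,G)} = H` and
`H^{(n+1,G)} = (H^{(n,G)})^p [H^{(n,G)}, G]`.  Taking `H = ⊤` gives the lower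
`p`-central series `G^{(n)}` of `G` (with `G^{(1)} = G`). -/
def pSeries (p : ℕ) {G : Type*} [Group G] (H : Subgroup G) : ℕ → Subgroup G
  | 0 => H
  | 1 => H
  | (n + 2) => pStep p (pSeries p H (n + 1))

section PStep

variable {p : ℕ} {G : Type*} [Group G]

lemma pow_mem_pStep {H : Subgroup G} {h : G} (hh : h ∈ H) : h ^ p ∈ pStep p H :=
  Subgroup.subset_closure (Or.inl ⟨h, hh, rfl⟩)

lemma commutator_mem_pStep {H : Subgroup G} {h : G} (hh : h ∈ H) (g : G) :
    ⁅h, g⁆ ∈ pStep p H :=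
  Subgroup.subset_closure (Or.inr ⟨h, hh, g, rfl⟩)

lemma pStep_le_iff {H K : Subgroup G} :
    pStep p H ≤ K ↔ (∀ h ∈ H, h ^ p ∈ K) ∧ ∀ h ∈ H, ∀ g : G, ⁅h, g⁆ ∈ K := by
  refine ⟨fun hK => ⟨fun _ hh => hK (pow_mem_pStep hh),
    fun _ hh g => hK (commutator_mem_pStep hh g)⟩, fun ⟨hpow, hcomm⟩ => ?_⟩
  rw [pStep, Subgroup.closure_le]
  rintro _ (⟨h, hh, rfl⟩ | ⟨h, hh, g, rfl⟩)
  exacts [hpow h hh, hcomm h hh g]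

lemma pStep_mono {H K : Subgroup G} (hHK : H ≤ K) : pStep p H ≤ pStep p K :=
  pStep_le_iff.mpr ⟨fun _ hh => pow_mem_pStep (hHK hh), fun _ hh => commutator_mem_pStep (hHK hh)⟩

lemma pStep_le_self {H : Subgroup G} (hH : H.Normal) : pStep p H ≤ H := by
  refine pStep_le_iff.mpr ⟨fun h hh => pow_mem hh p, fun h hh g => ?_⟩
  rw [show ⁅h, g⁆ = h * (g * h⁻¹ * g⁻¹) by group]
  exact mul_mem hh (hH.conj_mem _ (inv_mem hh) g)

lemma pStep_normal {H : Subgroup G} (hH : H.Normal) : (pStep p H).Normal := by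
  refine ⟨fun x hx c => ?_⟩
  have hconj : pStep p H ≤ (pStep p H).comap (MulAut.conj c).toMonoidHom := by
    refine pStep_le_iff.mpr ⟨fun h hh => ?_, fun h hh g => ?_⟩ <;>
      simp only [Subgroup.mem_comap, MulEquiv.coe_toMonoidHom, MulAut.conj_apply]
    · simpa [conj_pow] using pow_mem_pStep (p := p) (hH.conj_mem h hh c)
    · have hconj_comm : c * ⁅h, g⁆ * c⁻¹ = ⁅c * h * c⁻¹, c * g * c⁻¹⁆ := by
        simp only [commutatorElement_def]
        group
      exact hconj_comm ▸ commutator_mem_pStep (hH.conj_mem h hh c) _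
  exact hconj hx

instance pSeries_normal {H : Subgroup G} [hH : H.Normal] (n : ℕ) : (pSeries p H n).Normal := by
  induction n with
  | zero => exact hH
  | succ n ih =>
    cases n with
    | zero => exact hH
    | succ n => exact pStep_normal ih

lemma pStep_top_le_subgroupOf (H : Subgroup G) :
    pStep p (⊤ : Subgroup H) ≤ (pStep p H).subgroupOf H :=
  pStep_le_iff.mpr ⟨fun h _ => pow_mem_pStep h.2, fun h _ g => commutator_mem_pStep h.2 g⟩

end PStep

section ElementaryAbelian

variable {p : ℕ} [Fact p.Prime] {A : Type*} [CommGroup A]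

lemma CommGroup.exists_monoidHom_zmod_ne_one (hA : ∀ a : A, a ^ p = 1) {a : A} (ha : a ≠ 1) :
    ∃ f : A →* Multiplicative (ZMod p), f a ≠ 1 := by
  -- An opaque `have` suffices (all `ZMod p`-module structures agree), and `letI` would expose
  -- instance paths that defeat the coercion of linear maps to functions.
  have : Module (ZMod p) (Additive A) :=
    AddCommGroup.zmodModule fun a => congrArg Additive.ofMul (hA a.toMul)
  obtain ⟨f, hf⟩ : ∃ f : Module.Dual (ZMod p) (Additive A), f (Additive.ofMul a) ≠ 0 := by
    by_contra! h
    exact ha ((Module.forall_dual_apply_eq_zero_iff _ (Additive.ofMul a)).mp h)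
  exact ⟨AddMonoidHom.toMultiplicativeRight f.toAddMonoidHom, hf⟩

lemma CommGroup.exists_monoidHom_zmod_extend (hA : ∀ a : A, a ^ p = 1) (K : Subgroup A)
    (f : K →* Multiplicative (ZMod p)) :
    ∃ g : A →* Multiplicative (ZMod p), g.comp K.subtype = f := by
  have : Module (ZMod p) (Additive A) :=
    AddCommGroup.zmodModule fun a => congrArg Additive.ofMul (hA a.toMul)
  have : Module (ZMod p) (Additive K) :=
    AddCommGroup.zmodModule fun k => congrArg Additive.ofMul (Subtype.ext (hA k.toMul))
  obtain ⟨r, hr⟩ := LinearMap.exists_leftInverse_of_injective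
    ((MonoidHom.toAdditive K.subtype).toZModLinearMap p)
    (LinearMap.ker_eq_bot.mpr K.subtype_injective)
  refine ⟨AddMonoidHom.toMultiplicativeRight
    ((MonoidHom.toAdditiveLeft f).toZModLinearMap p ∘ₗ r).toAddMonoidHom, ?_⟩
  ext k
  have hk : r (Additive.ofMul (k : A)) = Additive.ofMul k :=
    LinearMap.congr_fun hr (Additive.ofMul k)
  simp [hk]

end ElementaryAbelian

section QuotientByPStep

variable {p : ℕ} {G : Type*} [Group G] {M : Subgroup G} [M.Normal]

abbrev commGroupQuotientOfPStepLE (hM : pStep p (⊤ : Subgroup G) ≤ M) : CommGroup (G ⧸ M) where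
  mul_comm := by
    rintro ⟨a⟩ ⟨b⟩
    refine QuotientGroup.eq.mpr ?_
    rw [show (a * b)⁻¹ * (b * a) = ⁅b⁻¹, a⁻¹⁆ by group]
    exact hM (commutator_mem_pStep (Subgroup.mem_top _) _)

lemma pow_eq_one_of_pStep_le (hM : pStep p (⊤ : Subgroup G) ≤ M) (a : G ⧸ M) : a ^ p = 1 := by
  induction a using QuotientGroup.induction_on with
  | H a => exact (QuotientGroup.eq_one_iff _).mpr (hM (pow_mem_pStep (Subgroup.mem_top a)))

variable [Fact p.Prime]

lemma exists_monoidHom_zmod_of_notMem (hM : pStep p (⊤ : Subgroup G) ≤ M) {x : G} (hx : x ∉ M) :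
    ∃ φ : G →* Multiplicative (ZMod p), M ≤ φ.ker ∧ φ x ≠ 1 := by
  let _ := commGroupQuotientOfPStepLE hM
  obtain ⟨f, hf⟩ := CommGroup.exists_monoidHom_zmod_ne_one (pow_eq_one_of_pStep_le hM)
    (mt (QuotientGroup.eq_one_iff x).mp hx)
  refine ⟨f.comp (QuotientGroup.mk' M), fun m hm => ?_, hf⟩
  simp [(QuotientGroup.eq_one_iff m).mpr hm]

lemma le_iff_forall_le_ker_of_pStep_le (hM : pStep p (⊤ : Subgroup G) ≤ M) {N : Subgroup G} :
    N ≤ M ↔ ∀ φ : G →* Multiplicative (ZMod p), M ≤ φ.ker → N ≤ φ.ker := by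
  refine ⟨fun hNM φ hφ => hNM.trans hφ, fun h x hx => ?_⟩
  by_contra hxM
  obtain ⟨φ, hφ, hφx⟩ := exists_monoidHom_zmod_of_notMem hM hxM
  exact hφx (h φ hφ hx)

lemma exists_monoidHom_zmod_extend_of_pStep_le (hM : pStep p (⊤ : Subgroup G) ≤ M)
    (H : Subgroup G) (φ : H →* Multiplicative (ZMod p)) (hφ : M.subgroupOf H ≤ φ.ker) :
    ∃ ψ : G →* Multiplicative (ZMod p), M ≤ ψ.ker ∧ ψ.comp H.subtype = φ := by
  let _ := commGroupQuotientOfPStepLE hM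
  set j : H →* G ⧸ M := (QuotientGroup.mk' M).comp H.subtype
  have hj : j.rangeRestrict.ker = M.subgroupOf H := by
    ext h
    simp [j, Subgroup.mem_subgroupOf, MonoidHom.ker_rangeRestrict]
  obtain ⟨g, hg⟩ := CommGroup.exists_monoidHom_zmod_extend (pow_eq_one_of_pStep_le hM) j.range
    (j.rangeRestrict.liftOfSurjective j.rangeRestrict_surjective ⟨φ, hj ▸ hφ⟩)
  refine ⟨g.comp (QuotientGroup.mk' M), fun m hm => ?_, ?_⟩
  · simp [(QuotientGroup.eq_one_iff m).mpr hm]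
  · ext h
    simpa [j] using DFunLike.congr_fun hg (j.rangeRestrict h)

end QuotientByPStep

/-- Lemma 2.3: assume `R` is a normal subgroup of `S` with `R ≤ S^{(2)}` and
`R^{(2,S)} = R ∩ S^{(3)}`.  Then the following are equivalent:
(1) `R^{(3,S)} = R ∩ S^{(4)}`;
(2) `R^{(3,S)} = R^{(2,S)} ∩ S^{(4)}`;
(3) every homomorphism `φ : R^{(2,S)} → ℤ/pℤ` killing `R^{(3,S)}` kills
    `R^{(2,S)} ∩ S^{(4)}`;
(4) every homomorphism `φ : R^{(2,S)} → ℤ/pℤ` killing `R^{(3,S)}` is the restriction of a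
    homomorphism `ψ : S^{(3)} → ℤ/pℤ` killing `S^{(4)}`. -/
theorem stmt3 (p : ℕ) (hp : p.Prime) {S : Type*} [Group S] (R : Subgroup S) [R.Normal]
    (hR : R ≤ pSeries p (⊤ : Subgroup S) 2)
    (h2 : pSeries p R 2 = R ⊓ pSeries p (⊤ : Subgroup S) 3) :
    List.TFAE
      [ pSeries p R 3 = R ⊓ pSeries p (⊤ : Subgroup S) 4,
        pSeries p R 3 = pSeries p R 2 ⊓ pSeries p (⊤ : Subgroup S) 4,
        ∀ φ : ↥(pSeries p R 2) →* Multiplicative (ZMod p),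
          (pSeries p R 3).subgroupOf (pSeries p R 2) ≤ φ.ker →
          (pSeries p R 2 ⊓ pSeries p (⊤ : Subgroup S) 4).subgroupOf (pSeries p R 2) ≤ φ.ker,
        ∀ φ : ↥(pSeries p R 2) →* Multiplicative (ZMod p),
          (pSeries p R 3).subgroupOf (pSeries p R 2) ≤ φ.ker →
          ∃ ψ : ↥(pSeries p (⊤ : Subgroup S) 3) →* Multiplicative (ZMod p),
            (pSeries p (⊤ : Subgroup S) 4).subgroupOf (pSeries p (⊤ : Subgroup S) 3) ≤ ψ.ker ∧
            ∀ (x : S) (hx2 : x ∈ pSeries p R 2) (hx3 : x ∈ pSeries p (⊤ : Subgroup S) 3),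
              ψ ⟨x, hx3⟩ = φ ⟨x, hx2⟩ ] := by
  have : Fact p.Prime := ⟨hp⟩
  have hR2 : pSeries p R 2 ≤ pSeries p ⊤ 3 := pStep_mono hR
  have hR3 : pSeries p R 3 ≤ pSeries p R 2 ⊓ pSeries p ⊤ 4 :=
    le_inf (pStep_le_self inferInstance) (pStep_mono hR2)
  have hT4 : pSeries p (⊤ : Subgroup S) 4 ≤ pSeries p ⊤ 3 := pStep_le_self inferInstance
  have hR23 : pStep p (⊤ : Subgroup (pSeries p R 2)) ≤ (pSeries p R 3).subgroupOf (pSeries p R 2) :=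
    pStep_top_le_subgroupOf _
  have hT34 : pStep p (⊤ : Subgroup (pSeries p (⊤ : Subgroup S) 3)) ≤
      (pSeries p ⊤ 4).subgroupOf (pSeries p ⊤ 3) :=
    pStep_top_le_subgroupOf _
  tfae_have 1 ↔ 2 := by rw [h2, inf_assoc, inf_eq_right.mpr hT4]
  tfae_have 2 ↔ 3 := by
    rw [le_antisymm_iff, and_iff_right hR3, ← le_iff_forall_le_ker_of_pStep_le hR23]
    exact ⟨Subgroup.subgroupOf_mono _, fun h x hx => h (x := ⟨x, hx.1⟩) hx⟩
  tfae_have 3 → 4 := by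
    intro h3 φ hφ
    obtain ⟨ψ, hψ, hψφ⟩ := exists_monoidHom_zmod_extend_of_pStep_le hT34
      ((pSeries p R 2).subgroupOf (pSeries p ⊤ 3))
      (φ.comp (Subgroup.subgroupOfEquivOfLe hR2).toMonoidHom)
      (fun x hx4 => h3 φ hφ ⟨x.2, hx4⟩)
    exact ⟨ψ, hψ, fun x hx2 hx3 => DFunLike.congr_fun hψφ ⟨⟨x, hx3⟩, hx2⟩⟩
  tfae_have 4 → 3 := by
    intro h4 φ hφ x hx
    obtain ⟨ψ, hψ, hψφ⟩ := h4 φ hφ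
    rw [MonoidHom.mem_ker, ← hψφ x x.2 (hT4 hx.2)]
    exact hψ hx.2
  tfae_finish
end

section
/- Let p be a prime, S the free group on three generators x₁, x₂, x₃, let w = [[x₁,x₂],x₃] be the iterated commutator, and let R be the normal closure of w in S. Then w ∈ R ∩ S^{(3)} but w ∉ R^{(2,S)} = R^p[R,S]; in particular R^{(2,S)} ≠ R ∩ S^{(3)}. -/
/-!
Map the free group to `SL₄(𝔽_p)` by `xᵢ ↦ 1 + E_{i,i+1}`. Then `w ↦ 1 + E_{0,3}`, which is central
in the image and has order `p`. Hence the normal closure `R` of `w` lands in the cyclic group it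
generates, so both `R^p` and `[R,S]` lie in the kernel, while `w` does not.
-/

open scoped commutatorElement

namespace Matrix.SpecialLinearGroup

variable {ι F : Type*} [DecidableEq ι] [Fintype ι] [CommRing F]

lemma transvection_pow {i j : ι} (hij : i ≠ j) (b : F) (n : ℕ) :
    transvection hij b ^ n = transvection hij (n * b) := by
  induction n with
  | zero => simp
  | succ n ih => rw [pow_succ, ih, ← transvection_add, Nat.cast_succ, add_one_mul]

lemma transvection_ne_one {i j : ι} (hij : i ≠ j) {b : F} (hb : b ≠ 0) :
    transvection hij b ≠ 1 := fun h ↦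
  hb <| (transvection_mem_center_iff hij b).1 (h ▸ Subgroup.one_mem _)

lemma commute_transvection {i j k l : ι} (hij : i ≠ j) (hkl : k ≠ l) (hjk : j ≠ k)
    (hli : l ≠ i) (a b : F) : Commute (transvection hij a) (transvection hkl b) :=
  Subtype.ext <| by
    simp [transvection_coe, mul_add, add_mul, single_mul_single_of_ne _ _ _ _ hjk,
      single_mul_single_of_ne _ _ _ _ hli, add_comm, add_left_comm]

lemma commutatorElement_transvection {i j k : ι} (hij : i ≠ j) (hjk : j ≠ k) (hik : i ≠ k)
    (a b : F) : ⁅transvection hij a, transvection hjk b⁆ = transvection hik (a * b) :=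
  Subtype.ext <| by
    simp [commutatorElement_def, transvection_inv, transvection_coe, mul_add, add_mul,
      single_mul_single_of_ne _ _ _ _ hij.symm, single_mul_single_of_ne _ _ _ _ hjk.symm,
      single_mul_single_of_ne _ _ _ _ hik.symm]
    simp only [← single_neg]
    abel

end Matrix.SpecialLinearGroup

section

variable {G K : Type*} [Group G] [Group K]

lemma commutatorElement_mem_pStep (p : ℕ) {H : Subgroup G} {h : G} (hh : h ∈ H) (g : G) :
    ⁅h, g⁆ ∈ pStep p H :=
  Subgroup.subset_closure (Or.inr ⟨h, hh, g, rfl⟩)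

lemma normalClosure_singleton_le_comap_zpowers (φ : G →* K) {w : G}
    (hw : ∀ g, Commute (φ w) (φ g)) :
    Subgroup.normalClosure {w} ≤ (Subgroup.zpowers (φ w)).comap φ := by
  have : ((Subgroup.zpowers (φ w)).comap φ).Normal := ⟨fun n hn g ↦ by
    obtain ⟨k, hk⟩ := Subgroup.mem_zpowers_iff.1 (Subgroup.mem_comap.1 hn)
    refine Subgroup.mem_comap.2 (Subgroup.mem_zpowers_iff.2 ⟨k, ?_⟩)
    rw [map_mul, map_mul, map_inv, ← hk, ← ((hw g).zpow_left k).eq, mul_inv_cancel_right]⟩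
  exact Subgroup.normalClosure_le_normal <| Set.singleton_subset_iff.2 <|
    Subgroup.mem_comap.2 (Subgroup.mem_zpowers _)

lemma pStep_le_ker (p : ℕ) (φ : G →* K) {z : K} (hz : ∀ g, Commute z (φ g)) (hzp : z ^ p = 1)
    {R : Subgroup G} (hR : R ≤ (Subgroup.zpowers z).comap φ) : pStep p R ≤ φ.ker := by
  refine (Subgroup.closure_le _).2 ?_
  rintro _ (⟨r, hr, rfl⟩ | ⟨r, hr, g, rfl⟩) <;>
    obtain ⟨k, hk⟩ := Subgroup.mem_zpowers_iff.1 (hR hr) <;>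
    simp only [SetLike.mem_coe, MonoidHom.mem_ker]
  · rw [map_pow, ← hk, ← zpow_natCast, ← zpow_mul, mul_comm, zpow_mul, zpow_natCast, hzp,
      one_zpow]
  · rw [map_commutatorElement, ← hk]
    exact ((hz g).zpow_left k).commutator_eq

lemma FreeGroup.commute_lift {α : Type*} {f : α → G} {z : G} (hz : ∀ a, Commute z (f a))
    (x : FreeGroup α) : Commute z (FreeGroup.lift f x) :=
  (Subgroup.mem_centralizer_singleton_iff.1 <| FreeGroup.range_lift_le
    (s := Subgroup.centralizer {z}) (Set.range_subset_iff.2 fun a ↦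
      Subgroup.mem_centralizer_singleton_iff.2 (hz a).eq.symm) ⟨x, rfl⟩).symm

end

open Matrix.SpecialLinearGroup MatrixGroups in
/-- Example B: let `S` be the free group on three generators `x₁, x₂, x₃`, let
`w = ⁅⁅x₁, x₂⁆, x₃⁆`, and let `R` be the normal closure of `w` in `S`.  Then
`w ∈ R ∩ S^{(3)}` but `w ∉ R^{(2,S)} = R^p[R,S]`; in particular
`R^{(2,S)} ≠ R ∩ S^{(3)}`. -/
theorem stmt8 (p : ℕ) (hp : p.Prime) (w : FreeGroup (Fin 3))
    (hw : w = ⁅⁅FreeGroup.of (0 : Fin 3), FreeGroup.of (1 : Fin 3)⁆, FreeGroup.of (2 : Fin 3)⁆)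
    (R : Subgroup (FreeGroup (Fin 3))) (hR : R = Subgroup.normalClosure {w}) :
    w ∈ R ⊓ pSeries p (⊤ : Subgroup (FreeGroup (Fin 3))) 3 ∧
    w ∉ pSeries p R 2 ∧
    pSeries p R 2 ≠ R ⊓ pSeries p (⊤ : Subgroup (FreeGroup (Fin 3))) 3 := by
  have : Fact p.Prime := ⟨hp⟩
  have hwR : w ∈ R := hR ▸ Subgroup.subset_normalClosure rfl
  have hwS3 : w ∈ pSeries p (⊤ : Subgroup (FreeGroup (Fin 3))) 3 := hw ▸
    commutatorElement_mem_pStep p (commutatorElement_mem_pStep p (Subgroup.mem_top _) _) _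
  let φ : FreeGroup (Fin 3) →* SL(4, ZMod p) := FreeGroup.lift
    ![transvection (i := 0) (j := 1) (by decide) 1, transvection (i := 1) (j := 2) (by decide) 1,
      transvection (i := 2) (j := 3) (by decide) 1]
  have hφw : φ w = transvection (i := 0) (j := 3) (by decide) 1 := by
    simp [φ, hw, commutatorElement_transvection]
  have hz : ∀ g, Commute (φ w) (φ g) := FreeGroup.commute_lift fun a ↦ by
    rw [hφw]; fin_cases a <;> apply commute_transvection <;> decide
  have hzp : φ w ^ p = 1 := by simp [hφw, transvection_pow]
  have hw2 : w ∉ pSeries p R 2 := fun h ↦ by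
    have hker := pStep_le_ker p φ hz hzp (hR ▸ normalClosure_singleton_le_comap_zpowers φ hz) h
    rw [MonoidHom.mem_ker, hφw] at hker
    exact transvection_ne_one _ one_ne_zero hker
  exact ⟨⟨hwR, hwS3⟩, hw2, fun h ↦ hw2 (h ▸ ⟨hwR, hwS3⟩)⟩
end
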